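/- If h = h1 + h2 and h' = h'1 + h'2 are sums (multiset unions) of anonymized histograms, then ℓ1(h, h') ≤ ℓ1(h1, h'1) + ℓ1(h2, h'2). -/

import Mathlib

/-!
Layer-cake argument: the `i`-th largest element of `h` is at least `t > 0` exactly when
`i < #{a ∈ h | t ≤ a}`, so writing each `|n_(i)(h) - n_(i)(h')|` as a sum of indicator
differences over the levels `t` and exchanging the sums gives
`ℓ1(h, h') = ∑_{t ≥ 1} |#{a ∈ h | t ≤ a} - #{a ∈ h' | t ≤ a}|`.
These level counts are additive under multiset sum, so the inequality holds level by level
by the triangle inequality.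
-/

/-- The `i`-th largest element (0-indexed) of a finite multiset of naturals,
taken to be `0` when `i` exceeds the number of elements. -/
def nthLargest (h : Multiset ℕ) (i : ℕ) : ℕ :=
  ((h.sort (· ≤ ·)).reverse).getD i 0

/-- The sorted ℓ1 distance `Σ_{i≥1} |n_(i)(h1) − n_(i)(h2)|` between two
anonymized histograms.  All terms with `i ≥ h1.card + h2.card` vanish, so the
finite sum below equals the infinite sum. -/
def sortedL1 (h1 h2 : Multiset ℕ) : ℕ :=
  ∑ i ∈ Finset.range (h1.card + h2.card),
    ((nthLargest h1 i : ℤ) - (nthLargest h2 i : ℤ)).natAbs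

open Finset

theorem natAbs_sub_eq_sum_range_natAbs_indicator {a b N : ℕ} (ha : a ≤ N) (hb : b ≤ N) :
    ((a : ℤ) - b).natAbs =
      ∑ i ∈ range N, ((if i < a then 1 else 0 : ℤ) - if i < b then 1 else 0).natAbs := by
  calc ((a : ℤ) - b).natAbs = #(Ico (min a b) (max a b)) := by simp only [Nat.card_Ico]; omega
    _ = ∑ i ∈ range N, if i ∈ Ico (min a b) (max a b) then 1 else 0 := by
      rw [sum_ite_mem, sum_const, smul_eq_mul, mul_one,
        inter_eq_right.mpr fun i hi => by simp only [mem_Ico, mem_range] at hi ⊢; omega]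
    _ = _ := sum_congr rfl fun i _ => by simp only [mem_Ico]; split_ifs <;> omega

theorem List.le_getD_iff_lt_countP {α : Type*} [LinearOrder α] {l : List α}
    (hl : l.Pairwise (· ≥ ·)) {d t : α} (ht : ¬ t ≤ d) (i : ℕ) :
    t ≤ l.getD i d ↔ i < l.countP (t ≤ ·) := by
  induction l generalizing i with
  | nil => simp [ht]
  | cons a l ih =>
    rw [List.pairwise_cons] at hl
    have hl0 (hta : ¬ t ≤ a) : l.countP (t ≤ ·) = 0 :=
      List.countP_eq_zero.mpr fun x hx htx => hta ((of_decide_eq_true htx).trans (hl.1 x hx))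
    cases i with
    | zero => by_cases hta : t ≤ a <;> simp [hta, hl0]
    | succ i =>
      rw [List.getD_cons_succ, ih hl.2, List.countP_cons]
      by_cases hta : t ≤ a <;> simp [hta, hl0]

theorem le_nthLargest_iff {h : Multiset ℕ} {t : ℕ} (ht : 0 < t) (i : ℕ) :
    t ≤ nthLargest h i ↔ i < h.countP (t ≤ ·) := by
  have hsorted : ((h.sort (· ≤ ·)).reverse).Pairwise (· ≥ ·) :=
    List.pairwise_reverse.mpr (Multiset.pairwise_sort h _)
  rw [nthLargest, List.le_getD_iff_lt_countP hsorted (by omega), List.countP_reverse]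
  conv_rhs => rw [← Multiset.sort_eq h (· ≤ ·), Multiset.coe_countP]

theorem nthLargest_le {h : Multiset ℕ} {T : ℕ} (hT : ∀ a ∈ h, a ≤ T) (i : ℕ) :
    nthLargest h i ≤ T := by
  by_contra! hlt
  have hcount : h.countP (T + 1 ≤ ·) = 0 :=
    Multiset.countP_eq_zero.mpr fun a ha => by have := hT a ha; omega
  exact absurd ((le_nthLargest_iff (t := T + 1) T.succ_pos i).mp hlt) (by omega)

theorem sortedL1_eq_sum_countP {h h' : Multiset ℕ} {T : ℕ} (hT : ∀ a ∈ h + h', a ≤ T) :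
    sortedL1 h h' = ∑ t ∈ range T,
      ((h.countP (t + 1 ≤ ·) : ℤ) - h'.countP (t + 1 ≤ ·)).natAbs := by
  have hTh : ∀ a ∈ h, a ≤ T := fun a ha => hT a (Multiset.mem_add.mpr (.inl ha))
  have hTh' : ∀ a ∈ h', a ≤ T := fun a ha => hT a (Multiset.mem_add.mpr (.inr ha))
  have hN : ∀ t, h.countP (t + 1 ≤ ·) ≤ h.card + h'.card :=
    fun t => (Multiset.countP_le_card _ _).trans (Nat.le_add_right _ _)
  have hN' : ∀ t, h'.countP (t + 1 ≤ ·) ≤ h.card + h'.card :=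
    fun t => (Multiset.countP_le_card _ _).trans (Nat.le_add_left _ _)
  unfold sortedL1
  simp_rw [natAbs_sub_eq_sum_range_natAbs_indicator (nthLargest_le hTh _) (nthLargest_le hTh' _),
    natAbs_sub_eq_sum_range_natAbs_indicator (hN _) (hN' _)]
  rw [sum_comm]
  refine sum_congr rfl fun t _ => sum_congr rfl fun i _ => ?_
  simp only [← Nat.add_one_le_iff (n := t), le_nthLargest_iff t.succ_pos]

theorem sortedL1_add_le_general (h1 h2 h1' h2' : Multiset ℕ) :
    sortedL1 (h1 + h2) (h1' + h2') ≤ sortedL1 h1 h1' + sortedL1 h2 h2' := by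
  set T := (h1 + h2 + (h1' + h2')).sum
  have hT : ∀ a ∈ h1 + h2 + (h1' + h2'), a ≤ T := fun _ ha => Multiset.le_sum_of_mem ha
  have hT₁ : ∀ a ∈ h1 + h1', a ≤ T := fun a ha =>
    hT a (by simp only [Multiset.mem_add] at ha ⊢; tauto)
  have hT₂ : ∀ a ∈ h2 + h2', a ≤ T := fun a ha =>
    hT a (by simp only [Multiset.mem_add] at ha ⊢; tauto)
  rw [sortedL1_eq_sum_countP hT, sortedL1_eq_sum_countP hT₁, sortedL1_eq_sum_countP hT₂,
    ← sum_add_distrib]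
  refine sum_le_sum fun t _ => ?_
  simp only [Multiset.countP_add]
  push_cast
  omega

/-- Dividing histograms only increases the distance: if `h = h1 + h2` and
`h' = h1' + h2'` (multiset sums), then
`ℓ1(h, h') ≤ ℓ1(h1, h1') + ℓ1(h2, h2')`. -/
theorem sortedL1_add_le (h1 h2 h1' h2' : Multiset ℕ)
    (hp1 : ∀ a ∈ h1, 0 < a) (hp2 : ∀ a ∈ h2, 0 < a)
    (hp1' : ∀ a ∈ h1', 0 < a) (hp2' : ∀ a ∈ h2', 0 < a) :
    sortedL1 (h1 + h2) (h1' + h2') ≤ sortedL1 h1 h1' + sortedL1 h2 h2' :=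
  sortedL1_add_le_general h1 h2 h1' h2'
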